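/- Let S¹ act continuously on a topological space M, let φ : M → ℝ be a continuous S¹-invariant function, and let a ∈ ℝ. Then the map sending m ∈ M_{φ<a} = {m ∈ M : φ(m) < a} to the S¹-orbit of (m, √(a − φ(m))) is a homeomorphism from M_{φ<a} (with the subspace topology) onto the subset of the cut space M^a = ψ⁻¹(a)/S¹ consisting of orbits of points (m, z) with z ≠ 0 (with the topology induced from the quotient topology on M^a). -/

import Mathlib

variable {M : Type*} [TopologicalSpace M] [MulAction Circle M]

/-- The level set `ψ⁻¹(a)` of `ψ(m, z) = φ(m) + |z|²` in `M × ℂ` (with the subspace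
topology). -/
abbrev PsiLevel (φ : M → ℝ) (a : ℝ) : Type _ :=
  {p : M × ℂ // φ p.1 + Complex.normSq p.2 = a}

/-- The orbit relation of the diagonal `S¹`-action on the level set `ψ⁻¹(a)`. -/
abbrev cutRel (φ : M → ℝ) (a : ℝ) : PsiLevel φ a → PsiLevel φ a → Prop :=
  fun p q => ∃ w : Circle, w • p.1.1 = q.1.1 ∧ (w : ℂ) * p.1.2 = q.1.2

/-- The cut space `M^a = ψ⁻¹(a)/S¹`, with the quotient topology. -/
abbrev CutSpace (φ : M → ℝ) (a : ℝ) : Type _ := Quot (cutRel φ a)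

/-- The subset of the cut space `M^a` consisting of the orbits of points `(m, z)` with
`z ≠ 0`, with the topology induced from the quotient topology on `M^a`. -/
abbrev CutSpaceNonzero (φ : M → ℝ) (a : ℝ) : Type _ :=
  {x : CutSpace φ a // ∃ p : PsiLevel φ a, p.1.2 ≠ 0 ∧ Quot.mk (cutRel φ a) p = x}

/-- The map of STATEMENT 4 : `m ∈ M_{φ<a}` is sent to the orbit of `(m, √(a - φ(m)))`,
which is an orbit of a point with nonzero `ℂ`-coordinate. -/
noncomputable def sublevelToCutSpace (φ : M → ℝ) (a : ℝ)
    (m : {m : M // φ m < a}) : CutSpaceNonzero φ a :=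
  ⟨Quot.mk _ ⟨(m.1, (Real.sqrt (a - φ m.1) : ℂ)), by
      have h : (0 : ℝ) ≤ a - φ m.1 := by linarith [m.2]
      rw [Complex.normSq_ofReal, Real.mul_self_sqrt h]; ring⟩,
    ⟨_, by
      have h : (0 : ℝ) < a - φ m.1 := by linarith [m.2]
      simpa using ne_of_gt (Real.sqrt_pos.mpr h), rfl⟩⟩

/-! On the part `N` of `ψ⁻¹(a)` where `z ≠ 0`, the rotation by `‖z‖ / z` moves `(m, z)` to
`(‖z‖ / z • m, ‖z‖)`, a point of the slice `{z > 0}`; since `φ` is invariant this slice is the graph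
of `m ↦ √(a - φ m)` over `M_{φ<a}`. So `(m, z) ↦ ‖z‖ / z • m` is a continuous retraction of `N`
onto that graph whose fibres are exactly the orbits, which makes `M_{φ<a}` homeomorphic to
`N / S¹`; and `N / S¹` is an open subspace of `M^a` because `N` is open and saturated. -/

open Function Topology

variable {X Y Z : Type*} [TopologicalSpace X] [TopologicalSpace Y] [TopologicalSpace Z]

theorem Topology.IsQuotientMap.imageFactorization_of_isOpen {f : X → Y} (hf : IsQuotientMap f)
    {U : Set X} (hU : IsOpen U) (hsat : f ⁻¹' (f '' U) = U) :
    IsQuotientMap (U.imageFactorization f) :=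
  (hf.restrictPreimage_isOpen (hf.isOpen_preimage.1 (by rwa [hsat]))).comp
    (Homeomorph.setCongr hsat.symm).isQuotientMap

theorem Topology.IsQuotientMap.isHomeomorph_comp_of_leftInverse {q : X → Y}
    (hq : IsQuotientMap q) {σ : Z → X} {r : X → Z} (hσ : Continuous σ) (hr : Continuous r)
    (hrσ : LeftInverse r σ) (hσr : ∀ x, q (σ (r x)) = q x)
    (hrq : ∀ x x', q x = q x' → r x = r x') :
    IsHomeomorph (q ∘ σ) := by
  set g : Y → Z := fun y => r (surjInv hq.surjective y)
  have hgq : ∀ x, g (q x) = r x := fun x => hrq _ _ (surjInv_eq _ _)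
  refine isHomeomorph_iff_exists_inverse.2
    ⟨hq.continuous.comp hσ, g, fun z => ?_, fun y => ?_, ?_⟩
  · simp only [comp_apply, hgq, hrσ z]
  · simp only [comp_apply, g, hσr, surjInv_eq]
  · exact hq.continuous_iff.2 (by simpa only [comp_def, hgq] using hr)

namespace Circle

noncomputable def ofNormDivSelf (z : ℂ) (hz : z ≠ 0) : Circle where
  val := ‖z‖ / z
  property := mem_sphere_zero_iff_norm.2 <| by
    rw [norm_div, Complex.norm_real, norm_norm, div_self (norm_ne_zero_iff.2 hz)]

@[simp]
lemma coe_ofNormDivSelf (z : ℂ) (hz : z ≠ 0) : (ofNormDivSelf z hz : ℂ) = ‖z‖ / z := rfl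

lemma ofNormDivSelf_mul_self (z : ℂ) (hz : z ≠ 0) : (ofNormDivSelf z hz : ℂ) * z = ‖z‖ :=
  div_mul_cancel₀ _ hz

lemma ofNormDivSelf_ofReal {r : ℝ} (hr : 0 < r) (h : (r : ℂ) ≠ 0) : ofNormDivSelf r h = 1 :=
  Circle.ext <| by simp [abs_of_pos hr, h]

lemma ofNormDivSelf_eq_mul_inv {w : Circle} {z z' : ℂ} (hz : z ≠ 0) (hz' : z' ≠ 0)
    (h : w * z = z') : ofNormDivSelf z' hz' = ofNormDivSelf z hz * w⁻¹ :=
  Circle.ext <| by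
    subst h
    simp only [coe_ofNormDivSelf, coe_mul, coe_inv, norm_mul, norm_coe, one_mul]
    field_simp

end Circle

lemma Continuous.circle_ofNormDivSelf {f : X → ℂ} (hf : Continuous f) (h0 : ∀ x, f x ≠ 0) :
    Continuous fun x => Circle.ofNormDivSelf (f x) (h0 x) :=
  .subtype_mk (.div (by fun_prop) hf h0) _

section CutSpace

variable (φ : M → ℝ) (a : ℝ)

def psiLevelNonzero : Set (PsiLevel φ a) := {p | p.1.2 ≠ 0}

noncomputable def sublevelSection (m : {m : M // φ m < a}) : psiLevelNonzero φ a :=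
  ⟨⟨(m.1, (√(a - φ m.1) : ℂ)), by
    rw [Complex.normSq_ofReal, Real.mul_self_sqrt (sub_nonneg.2 m.2.le), add_sub_cancel]⟩,
    Complex.ofReal_ne_zero.2 (Real.sqrt_pos.2 (sub_pos.2 m.2)).ne'⟩

noncomputable def sublevelRetraction (hφinv : ∀ (w : Circle) (m : M), φ (w • m) = φ m)
    (p : psiLevelNonzero φ a) : {m : M // φ m < a} :=
  ⟨Circle.ofNormDivSelf p.1.1.2 p.2 • p.1.1.1, by
    rw [hφinv, ← sub_pos, ← eq_sub_of_add_eq' p.1.2]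
    exact Complex.normSq_pos.2 p.2⟩

section Orbits

omit [TopologicalSpace M]

lemma cutRel_equivalence : Equivalence (cutRel φ a) where
  refl _ := ⟨1, by simp⟩
  symm := by
    rintro p q ⟨w, hm, hz⟩
    refine ⟨w⁻¹, by rw [← hm, inv_smul_smul], ?_⟩
    rw [← hz, ← mul_assoc, ← Circle.coe_mul, inv_mul_cancel, Circle.coe_one, one_mul]
  trans := by
    rintro p q r ⟨w, hm, hz⟩ ⟨v, hm', hz'⟩
    exact ⟨v * w, by rw [mul_smul, hm, hm'], by rw [Circle.coe_mul, mul_assoc, hz, hz']⟩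

lemma cutRel_of_mk_eq_mk {p q : PsiLevel φ a} (h : Quot.mk (cutRel φ a) p = Quot.mk _ q) :
    cutRel φ a p q :=
  (cutRel_equivalence φ a).eqvGen_iff.1 (Quot.eqvGen_exact h)

lemma preimage_image_mk_psiLevelNonzero :
    Quot.mk (cutRel φ a) ⁻¹' (Quot.mk _ '' psiLevelNonzero φ a) = psiLevelNonzero φ a := by
  refine (Set.subset_preimage_image _ _).antisymm' ?_
  rintro p ⟨q, hq, hqp⟩
  obtain ⟨w, -, hz⟩ := cutRel_of_mk_eq_mk φ a hqp
  show p.1.2 ≠ 0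
  exact hz ▸ mul_ne_zero (Circle.coe_ne_zero w) hq

omit [MulAction Circle M] in
lemma sqrt_sub_eq_norm (p : PsiLevel φ a) : √(a - φ p.1.1) = ‖p.1.2‖ := by
  rw [← eq_sub_of_add_eq' p.2, Complex.normSq_eq_norm_sq, Real.sqrt_sq (norm_nonneg _)]

variable {φ} (hφinv : ∀ (w : Circle) (m : M), φ (w • m) = φ m)

lemma leftInverse_sublevelRetraction_sublevelSection :
    LeftInverse (sublevelRetraction φ a hφinv) (sublevelSection φ a) := fun m =>
  Subtype.ext <| by
    simp [sublevelRetraction, sublevelSection,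
      Circle.ofNormDivSelf_ofReal (Real.sqrt_pos.2 (sub_pos.2 m.2))]

lemma cutRel_sublevelSection_sublevelRetraction (p : psiLevelNonzero φ a) :
    cutRel φ a p (sublevelSection φ a (sublevelRetraction φ a hφinv p)) := by
  refine ⟨Circle.ofNormDivSelf p.1.1.2 p.2, rfl, ?_⟩
  simp only [sublevelSection, sublevelRetraction, hφinv, sqrt_sub_eq_norm]
  exact Circle.ofNormDivSelf_mul_self _ _

lemma sublevelRetraction_eq_of_cutRel {p q : psiLevelNonzero φ a} (h : cutRel φ a p q) :
    sublevelRetraction φ a hφinv p = sublevelRetraction φ a hφinv q := by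
  obtain ⟨w, hm, hz⟩ := h
  refine Subtype.ext ?_
  simp only [sublevelRetraction, ← hm, Circle.ofNormDivSelf_eq_mul_inv p.2 q.2 hz,
    mul_smul, inv_smul_smul]

end Orbits

omit [MulAction Circle M] in
lemma isOpen_psiLevelNonzero : IsOpen (psiLevelNonzero φ a) :=
  isOpen_compl_singleton.preimage (continuous_snd.comp continuous_subtype_val)

omit [MulAction Circle M] in
lemma continuous_sublevelSection (hφc : Continuous φ) : Continuous (sublevelSection φ a) := by
  unfold sublevelSection
  fun_prop

variable {φ} in
lemma continuous_sublevelRetraction [ContinuousSMul Circle M]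
    (hφinv : ∀ (w : Circle) (m : M), φ (w • m) = φ m) :
    Continuous (sublevelRetraction φ a hφinv) :=
  .subtype_mk (.smul (.circle_ofNormDivSelf (by fun_prop) fun p => p.2) (by fun_prop)) _

end CutSpace

/-- For a continuous `S¹`-action on `M`, a continuous invariant `φ : M → ℝ`
and `a ∈ ℝ`, the map `m ↦ [ (m, √(a - φ(m))) ]` is a homeomorphism from the sublevel set
`M_{φ<a}` onto the subset of the cut space `M^a = ψ⁻¹(a)/S¹` consisting of orbits of
points `(m, z)` with `z ≠ 0`. -/
theorem sublevel_homeomorph_cutSpace_nonzero [ContinuousSMul Circle M]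
    (φ : M → ℝ) (hφc : Continuous φ) (hφinv : ∀ (w : Circle) (m : M), φ (w • m) = φ m)
    (a : ℝ) :
    IsHomeomorph (sublevelToCutSpace φ a) :=
  (isQuotientMap_quot_mk.imageFactorization_of_isOpen (isOpen_psiLevelNonzero φ a)
    (preimage_image_mk_psiLevelNonzero φ a)).isHomeomorph_comp_of_leftInverse
    (continuous_sublevelSection φ a hφc) (continuous_sublevelRetraction a hφinv)
    (leftInverse_sublevelRetraction_sublevelSection a hφinv)
    (fun p => (Subtype.ext <| Quot.sound <|
      cutRel_sublevelSection_sublevelRetraction a hφinv p).symm)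
    (fun _ _ h => sublevelRetraction_eq_of_cutRel a hφinv
      (cutRel_of_mk_eq_mk φ a (congrArg Subtype.val h)))
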